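/- arXiv:2111.00093 — 5 statements merged into one kernel-verified Lean document; each statement's English description precedes it below -/
import Mathlib

section
/- Let N ∈ ℕ with N ≥ 1, let ω ∈ 𝕋 be an integer multiple of 2^{−N}, and let τ ∈ ℤ. Then the wedge flow map H_ω^τ maps the grid G_N bijectively onto itself, and likewise V_ω^τ maps G_N bijectively onto itself. -/
/- 𝕋 = ℝ/ℤ, with d_𝕋 the quotient distance (norm of the difference in AddCircle 1). -/
noncomputable section

abbrev T1 := AddCircle (1 : ℝ)

/-- The distance d_𝕋(x,y) = min{|x−y|, 1−|x−y|} on 𝕋. -/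
noncomputable def dT (x y : T1) : ℝ := ‖x - y‖

/-- Horizontal wedge flow map H_ω^τ(x₁,x₂) = (x₁ + τ·d_𝕋(x₂,ω), x₂). -/
noncomputable def Hmap (ω : T1) (τ : ℝ) (p : T1 × T1) : T1 × T1 :=
  (p.1 + (↑(τ * dT p.2 ω) : T1), p.2)

/-- Vertical wedge flow map V_ω^τ(x₁,x₂) = (x₁, x₂ + τ·d_𝕋(x₁,ω)). -/
noncomputable def Vmap (ω : T1) (τ : ℝ) (p : T1 × T1) : T1 × T1 :=
  (p.1, p.2 + (↑(τ * dT p.1 ω) : T1))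

/-- The grid G_N ⊆ 𝕋² of points both of whose coordinates are integer multiples of 2^{-N}. -/
def gridGN (N : ℕ) : Set (T1 × T1) :=
  {p | ∃ a b : ℤ, p.1 = (((a : ℝ) / 2 ^ N : ℝ) : T1) ∧ p.2 = (((b : ℝ) / 2 ^ N : ℝ) : T1)}

/-- dT between two grid points is an integer multiple of 2^{-N}. -/
lemma dT_grid (N : ℕ) (a k : ℤ) :
    ∃ m : ℤ, dT ((((a : ℝ) / 2 ^ N : ℝ) : T1)) ((((k : ℝ) / 2 ^ N : ℝ) : T1))
      = (m : ℝ) / 2 ^ N := by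
  have hsub : ((((a : ℝ) / 2 ^ N : ℝ) : T1)) - ((((k : ℝ) / 2 ^ N : ℝ) : T1))
      = ((((a : ℝ) - k) / 2 ^ N : ℝ) : T1) := by
    rw [← QuotientAddGroup.mk_sub]
    ring_nf
  set x : ℝ := ((a : ℝ) - k) / 2 ^ N
  set r : ℤ := round ((1 : ℝ)⁻¹ * x)
  refine ⟨|a - k - r * 2 ^ N|, ?_⟩
  rw [dT, hsub, AddCircle.norm_eq]
  have h2 : (0:ℝ) < 2 ^ N := by positivity
  have hx : x - (↑(round ((1:ℝ)⁻¹ * x)) : ℝ) * 1 = ((a:ℝ) - k - (r:ℝ) * 2 ^ N) / 2 ^ N := by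
    simp only [x, r]
    field_simp
  rw [hx, abs_div, abs_of_pos h2]
  push_cast
  ring

lemma hmap_mapsTo (N : ℕ) (ω : T1)
    (hω : ∃ k : ℤ, ω = (((k : ℝ) / 2 ^ N : ℝ) : T1)) (τ : ℤ) :
    Set.MapsTo (Hmap ω (τ : ℝ)) (gridGN N) (gridGN N) := by
  rintro p ⟨a, b, h1, h2⟩
  obtain ⟨k, hk⟩ := hω
  obtain ⟨m, hm⟩ := dT_grid N b k
  refine ⟨a + τ * m, b, ?_, h2⟩
  show p.1 + _ = _
  rw [h1, h2, hk, hm, ← QuotientAddGroup.mk_add]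
  congr 1
  push_cast
  ring

lemma vmap_mapsTo (N : ℕ) (ω : T1)
    (hω : ∃ k : ℤ, ω = (((k : ℝ) / 2 ^ N : ℝ) : T1)) (τ : ℤ) :
    Set.MapsTo (Vmap ω (τ : ℝ)) (gridGN N) (gridGN N) := by
  rintro p ⟨a, b, h1, h2⟩
  obtain ⟨k, hk⟩ := hω
  obtain ⟨m, hm⟩ := dT_grid N a k
  refine ⟨a, b + τ * m, h1, ?_⟩
  show p.2 + _ = _
  rw [h1, h2, hk, hm, ← QuotientAddGroup.mk_add]
  congr 1
  push_cast
  ring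

lemma hmap_inv (ω : T1) (τ : ℝ) (p : T1 × T1) :
    Hmap ω (-τ) (Hmap ω τ p) = p := by
  simp only [Hmap]
  ext
  · show p.1 + _ + _ = p.1
    rw [add_assoc, ← QuotientAddGroup.mk_add]
    norm_num
  · rfl

lemma vmap_inv (ω : T1) (τ : ℝ) (p : T1 × T1) :
    Vmap ω (-τ) (Vmap ω τ p) = p := by
  simp only [Vmap]
  ext
  · rfl
  · show p.2 + _ + _ = p.2
    rw [add_assoc, ← QuotientAddGroup.mk_add]
    norm_num

/-- if ω is an integer multiple of 2^{−N} and τ ∈ ℤ, then H_ω^τ and V_ω^τ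
map the grid G_N bijectively onto itself. -/
theorem wedge_flows_preserve_grid (N : ℕ) (hN : 1 ≤ N) (ω : T1)
    (hω : ∃ k : ℤ, ω = (((k : ℝ) / 2 ^ N : ℝ) : T1)) (τ : ℤ) :
    Set.BijOn (Hmap ω (τ : ℝ)) (gridGN N) (gridGN N) ∧
    Set.BijOn (Vmap ω (τ : ℝ)) (gridGN N) (gridGN N) := by
  have hτ : ((-τ : ℤ) : ℝ) = -(τ : ℝ) := by push_cast; ring
  constructor
  · refine Set.InvOn.bijOn (f' := Hmap ω (-(τ:ℝ))) ⟨?_, ?_⟩ (hmap_mapsTo N ω hω τ) ?_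
    · intro p _; exact hmap_inv ω τ p
    · intro p _
      have := hmap_inv ω (-(τ:ℝ)) p
      rwa [neg_neg] at this
    · have := hmap_mapsTo N ω hω (-τ)
      rwa [hτ] at this
  · refine Set.InvOn.bijOn (f' := Vmap ω (-(τ:ℝ))) ⟨?_, ?_⟩ (vmap_mapsTo N ω hω τ) ?_
    · intro p _; exact vmap_inv ω τ p
    · intro p _
      have := vmap_inv ω (-(τ:ℝ)) p
      rwa [neg_neg] at this
    · have := vmap_mapsTo N ω hω (-τ)
      rwa [hτ] at this
end
end

section
/- For every s ∈ (0, 1/4) there exists δ > 0 such that for all (a,b) ∈ ℝ² with a² + b² < δ², one has (V_0^2 ∘ H_0^2)(s + a, s + 3/4 + b) = (1/2 − s + a − 2b, 3/4 − s + 2a − 3b) (all coordinates taken modulo 1); that is, V_0^2 ∘ H_0^2 is locally affine at each point of the segment {(s, s + 3/4) : s ∈ (0, 1/4)}, with linear part given by the matrix [[1, −2], [2, −3]]. -/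
/- 𝕋 = ℝ/ℤ, with d_𝕋 the quotient distance (norm of the difference in AddCircle 1). -/
noncomputable section

/-!
On the strip `1/2 ≤ x₂ ≤ 1` the distance of `x₂` to `0` is `1 - x₂`, and on the strip
`0 ≤ x₁ ≤ 1/2` the distance of `x₁` to `0` is `x₁`. Near the segment `(s, s + 3/4)` the point
stays in the first strip, and its image under `H_0^2` lands in the second, so there both maps are
affine and their composite is the affine map with linear part `[[1, -2], [2, -3]]`; the constant
`1` picked up in the second coordinate vanishes modulo `1`.
-/

open Set

lemma dT_coe_zero_of_abs_le_half {x : ℝ} (hx : |x| ≤ 1 / 2) : dT (x : T1) 0 = |x| := by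
  rw [dT, sub_zero, AddCircle.norm_coe_eq_abs_iff (p := (1 : ℝ)) one_ne_zero, abs_one]
  exact hx

lemma dT_coe_zero_of_mem_Icc {x : ℝ} (hx : x ∈ Icc 0 (1 / 2)) : dT (x : T1) 0 = x := by
  rw [dT_coe_zero_of_abs_le_half (abs_le.2 ⟨by linarith [hx.1], hx.2⟩), abs_of_nonneg hx.1]

lemma dT_coe_zero_of_mem_Icc_half_one {y : ℝ} (hy : y ∈ Icc (1 / 2) 1) :
    dT (y : T1) 0 = 1 - y := by
  have hy' : (y : T1) = ((y - 1 : ℝ) : T1) := by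
    rw [← AddCircle.coe_add_period (1 : ℝ) (y - 1), sub_add_cancel]
  rw [hy', dT_coe_zero_of_abs_le_half (abs_le.2 ⟨by linarith [hy.1], by linarith [hy.2]⟩),
    abs_of_nonpos (by linarith [hy.2]), neg_sub]

lemma Hmap_zero_of_mem_Icc (τ : ℝ) (x : T1) {y : ℝ} (hy : y ∈ Icc (1 / 2) 1) :
    Hmap 0 τ (x, (y : T1)) = (x + ((τ * (1 - y) : ℝ) : T1), (y : T1)) := by
  rw [Hmap, dT_coe_zero_of_mem_Icc_half_one hy]

lemma Vmap_zero_of_mem_Icc (τ : ℝ) {x : ℝ} (y : T1) (hx : x ∈ Icc 0 (1 / 2)) :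
    Vmap 0 τ ((x : T1), y) = ((x : T1), y + ((τ * x : ℝ) : T1)) := by
  rw [Vmap, dT_coe_zero_of_mem_Icc hx]

lemma Vmap_comp_Hmap_zero_of_mem_Icc (τ : ℝ) {x y : ℝ} (hy : y ∈ Icc (1 / 2) 1)
    (hxy : x + τ * (1 - y) ∈ Icc 0 (1 / 2)) :
    (Vmap 0 τ ∘ Hmap 0 τ) ((x : T1), (y : T1)) =
      (((x + τ * (1 - y) : ℝ) : T1), ((y + τ * (x + τ * (1 - y)) : ℝ) : T1)) := by
  rw [Function.comp_apply, Hmap_zero_of_mem_Icc τ _ hy, ← AddCircle.coe_add,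
    Vmap_zero_of_mem_Icc τ _ hxy, ← AddCircle.coe_add]

/-- V_0^2 ∘ H_0^2 is locally affine at each point of the segment
{(s, s+3/4) : s ∈ (0,1/4)}, with linear part [[1, −2], [2, −3]]. -/
theorem wedge_tau2_locally_affine (s : ℝ) (hs : s ∈ Set.Ioo (0 : ℝ) (1/4)) :
    ∃ δ > 0, ∀ a b : ℝ, a ^ 2 + b ^ 2 < δ ^ 2 →
      (Vmap 0 2 ∘ Hmap 0 2) (((s + a : ℝ) : T1), ((s + 3/4 + b : ℝ) : T1)) =
        (((1/2 - s + a - 2*b : ℝ) : T1), ((3/4 - s + 2*a - 3*b : ℝ) : T1)) := by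
  obtain ⟨hs0, hs4⟩ := hs
  obtain ⟨δ, hδ0, hδs, hδs'⟩ : ∃ δ > 0, 3 * δ ≤ s ∧ 3 * δ ≤ 1 / 4 - s :=
    ⟨min s (1 / 4 - s) / 3, by positivity, by linarith [min_le_left s (1 / 4 - s)],
      by linarith [min_le_right s (1 / 4 - s)]⟩
  refine ⟨δ, hδ0, fun a b hab => ?_⟩
  obtain ⟨ha₁, ha₂⟩ := abs_lt.1 <| abs_lt_of_sq_lt_sq (a := a) (by nlinarith [sq_nonneg b]) hδ0.le
  obtain ⟨hb₁, hb₂⟩ := abs_lt.1 <| abs_lt_of_sq_lt_sq (a := b) (by nlinarith [sq_nonneg a]) hδ0.le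
  rw [Vmap_comp_Hmap_zero_of_mem_Icc 2 ⟨by linarith, by linarith⟩ ⟨by linarith, by linarith⟩]
  congr 1
  · exact congrArg _ (by ring)
  · rw [← AddCircle.coe_add_period (1 : ℝ) (3 / 4 - s + 2 * a - 3 * b)]
    exact congrArg _ (by ring)
end
end

section
/- For every s ∈ (0, 1/4) there exists δ > 0 such that for all (a,b) ∈ ℝ² with a² + b² < δ², one has (V_0^2 ∘ H_0^2)²(s + a, s + 3/4 + b) = (s − 3a + 4b, s + 3/4 − 4a + 5b) (all coordinates taken modulo 1); that is, (V_0^2 ∘ H_0^2)² fixes each point (s, s + 3/4) and is locally affine there, with linear part given by the matrix [[−3, 4], [−4, 5]]. -/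
/- 𝕋 = ℝ/ℤ, with d_𝕋 the quotient distance (norm of the difference in AddCircle 1). -/
noncomputable section

/-! Under `Hmap 0 2`, `Vmap 0 2`, `Hmap 0 2`, `Vmap 0 2` the point `(s, s + 3/4)` runs through
`(1/2 - s, s + 3/4)`, `(1/2 - s, 7/4 - s)`, `(1 + s, 7/4 - s)`, `(1 + s, 7/4 + s)`, and every
distance to `0` met along the way lies strictly between `0` and `1/2`. So for a small perturbation
`(a, b)` each of the four maps stays on one affine branch of `d_𝕋(·, 0)`, and
composing these four affine maps gives the matrix `[[-3, 4], [-4, 5]]`. -/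

lemma coe_intCast_add (n : ℤ) (x : ℝ) : ((n + x : ℝ) : T1) = x := by
  rw [AddCircle.coe_add, add_eq_right, AddCircle.coe_eq_zero_iff]
  exact ⟨n, by simp⟩

lemma dT_coe_zero_eq {y d : ℝ} (n : ℤ) (hd₀ : 0 ≤ d) (hd₁ : d ≤ 1 / 2)
    (hy : y = n + d ∨ y = n - d) : dT (y : T1) 0 = d := by
  have hd : ‖(d : T1)‖ = d := by
    rw [(AddCircle.norm_coe_eq_abs_iff 1 one_ne_zero).2 (by rwa [abs_one, abs_of_nonneg hd₀]),
      abs_of_nonneg hd₀]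
  rcases hy with rfl | rfl
  · rw [dT, sub_zero, coe_intCast_add, hd]
  · rw [dT, sub_zero, sub_eq_add_neg, coe_intCast_add, AddCircle.coe_neg, norm_neg, hd]

lemma Hmap_coe_eq {ω y : T1} {τ x d x' : ℝ} (hd : dT y ω = d) (hx : x' = x + τ * d) :
    Hmap ω τ ((x : T1), y) = ((x' : T1), y) := by
  rw [Hmap, hd, hx, AddCircle.coe_add]

lemma Vmap_coe_eq {ω x : T1} {τ y d y' : ℝ} (hd : dT x ω = d) (hy : y' = y + τ * d) :
    Vmap ω τ (x, (y : T1)) = (x, (y' : T1)) := by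
  rw [Vmap, hd, hy, AddCircle.coe_add]

/-- (V_0^2 ∘ H_0^2)² fixes each point (s, s+3/4) with s ∈ (0,1/4) and is
locally affine there, with linear part [[−3, 4], [−4, 5]]. -/
theorem wedge_tau2_square_locally_affine (s : ℝ) (hs : s ∈ Set.Ioo (0 : ℝ) (1/4)) :
    ∃ δ > 0, ∀ a b : ℝ, a ^ 2 + b ^ 2 < δ ^ 2 →
      (Vmap 0 2 ∘ Hmap 0 2)^[2] (((s + a : ℝ) : T1), ((s + 3/4 + b : ℝ) : T1)) =
        (((s - 3*a + 4*b : ℝ) : T1), ((s + 3/4 - 4*a + 5*b : ℝ) : T1)) := by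
  obtain ⟨hs₀, hs₁⟩ := hs
  -- `7` bounds the sum of the absolute coefficients of `a, b` in each of the four distances
  obtain ⟨δ, hδ₀, hδs, hδs'⟩ : ∃ δ > 0, 7 * δ ≤ s ∧ 7 * δ ≤ 1/4 - s :=
    ⟨min s (1/4 - s) / 7, by have := lt_min hs₀ (sub_pos.2 hs₁); positivity,
      by linarith [min_le_left s (1/4 - s)], by linarith [min_le_right s (1/4 - s)]⟩
  refine ⟨δ, hδ₀, fun a b hab => ?_⟩
  obtain ⟨ha₀, ha₁⟩ := abs_lt.1 (abs_lt_of_sq_lt_sq (by nlinarith) hδ₀.le : |a| < δ)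
  obtain ⟨hb₀, hb₁⟩ := abs_lt.1 (abs_lt_of_sq_lt_sq (by nlinarith) hδ₀.le : |b| < δ)
  have h₁ := Hmap_coe_eq (τ := 2) (x := s + a) (x' := 1/2 - s + a - 2*b)
    (dT_coe_zero_eq (y := s + 3/4 + b) 1 (d := 1/4 - s - b) (by linarith) (by linarith)
      (Or.inr (by push_cast; ring))) (by ring)
  have h₂ := Vmap_coe_eq (τ := 2) (y := s + 3/4 + b) (y' := 7/4 - s + 2*a - 3*b)
    (dT_coe_zero_eq (y := 1/2 - s + a - 2*b) 0 (d := 1/2 - s + a - 2*b) (by linarith)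
      (by linarith) (Or.inl (by push_cast; ring))) (by ring)
  have h₃ := Hmap_coe_eq (τ := 2) (x := 1/2 - s + a - 2*b) (x' := s - 3*a + 4*b + 1)
    (dT_coe_zero_eq (y := 7/4 - s + 2*a - 3*b) 2 (d := 1/4 + s - 2*a + 3*b) (by linarith)
      (by linarith) (Or.inr (by push_cast; ring))) (by ring)
  have h₄ := Vmap_coe_eq (τ := 2) (y := 7/4 - s + 2*a - 3*b) (y' := s + 3/4 - 4*a + 5*b + 1)
    (dT_coe_zero_eq (y := s - 3*a + 4*b + 1) 1 (d := s - 3*a + 4*b) (by linarith)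
      (by linarith) (Or.inl (by push_cast; ring))) (by ring)
  simp only [Function.iterate_succ, Function.iterate_zero, Function.comp_apply, id_eq]
  rw [h₁, h₂, h₃, h₄, AddCircle.coe_add_period, AddCircle.coe_add_period]
end
end

section
/- For every s ∈ (0, 1/2), the map V_0^1 ∘ H_0^1 on 𝕋² satisfies (V_0^1 ∘ H_0^1)(s, s + 1/2) = (1/2, s), (V_0^1 ∘ H_0^1)(1/2, s) = (s + 1/2, 1/2), and (V_0^1 ∘ H_0^1)(s + 1/2, 1/2) = (s, s + 1/2) (all coordinates taken modulo 1). Consequently the three segments {(s, s + 1/2) : s ∈ (0, 1/2)}, {(1/2, s) : s ∈ (0, 1/2)}, and {(s, 1/2) : s ∈ (1/2, 1)} form a 3-cycle for V_0^1 ∘ H_0^1, and every point of each of these segments is a fixed point of (V_0^1 ∘ H_0^1)³. -/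
/- 𝕋 = ℝ/ℤ, with d_𝕋 the quotient distance (norm of the difference in AddCircle 1). -/
noncomputable section

/-! For `s ∈ [0, 1/2]` the points `s`, `s + 1/2`, `1/2` of `𝕋` lie at distance `s`, `1/2 - s`,
`1/2` from `0`. Along the three segments each of `H_0^1`, `V_0^1` therefore shifts one coordinate
by `1/2 - s` (taking `s` to `1/2`), by `s` (taking `1/2` to `s + 1/2`) or by `1/2` (taking
`s + 1/2` to `s + 1 = s`), which is exactly the 3-cycle. -/

open Function

lemma isPeriodicPt_three_of_cycle {α : Type*} {f : α → α} {a b c : α}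
    (hab : f a = b) (hbc : f b = c) (hca : f c = a) : IsPeriodicPt f 3 a := by
  show f (f (f a)) = a
  rw [hab, hbc, hca]

lemma Hmap_zero_one (x y : T1) : Hmap 0 1 (x, y) = (x + ((‖y‖ : ℝ) : T1), y) := by
  simp [Hmap, dT]

lemma Vmap_zero_one (x y : T1) : Vmap 0 1 (x, y) = (x, y + ((‖x‖ : ℝ) : T1)) := by
  simp [Vmap, dT]

section HalfTurn

variable {s : ℝ}

lemma norm_coe_of_nonneg_of_le_half (h0 : 0 ≤ s) (h1 : s ≤ 1/2) : ‖(s : T1)‖ = s := by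
  have habs : |s| ≤ |(1 : ℝ)| / 2 := by rwa [abs_of_nonneg h0, abs_one]
  rw [(AddCircle.norm_coe_eq_abs_iff _ one_ne_zero).2 habs, abs_of_nonneg h0]

lemma norm_coe_add_half (h0 : 0 ≤ s) (h1 : s ≤ 1/2) : ‖((s + 1/2 : ℝ) : T1)‖ = 1/2 - s := by
  have hneg : ((s + 1/2 : ℝ) : T1) = -((1/2 - s : ℝ) : T1) := by
    rw [← AddCircle.coe_neg, ← AddCircle.coe_add_period 1 (-(1/2 - s))]
    congr 1
    ring
  rw [hneg, norm_neg, norm_coe_of_nonneg_of_le_half (by linarith) (by linarith)]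

lemma norm_coe_half : ‖((1/2 : ℝ) : T1)‖ = 1/2 := by
  simpa using AddCircle.norm_half_period_eq (1 : ℝ)

lemma Vmap_comp_Hmap_apply_coe_coe_add_half (h0 : 0 ≤ s) (h1 : s ≤ 1/2) :
    (Vmap 0 1 ∘ Hmap 0 1) ((s : T1), ((s + 1/2 : ℝ) : T1)) = (((1/2 : ℝ) : T1), (s : T1)) := by
  rw [comp_apply, Hmap_zero_one, norm_coe_add_half h0 h1, ← AddCircle.coe_add, add_sub_cancel,
    Vmap_zero_one, norm_coe_half, ← AddCircle.coe_add, add_assoc, add_halves,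
    AddCircle.coe_add_period]

lemma Vmap_comp_Hmap_apply_half_coe (h0 : 0 ≤ s) (h1 : s ≤ 1/2) :
    (Vmap 0 1 ∘ Hmap 0 1) (((1/2 : ℝ) : T1), (s : T1)) =
      (((s + 1/2 : ℝ) : T1), ((1/2 : ℝ) : T1)) := by
  rw [comp_apply, Hmap_zero_one, norm_coe_of_nonneg_of_le_half h0 h1, ← AddCircle.coe_add,
    add_comm, Vmap_zero_one, norm_coe_add_half h0 h1, ← AddCircle.coe_add, add_sub_cancel]

lemma Vmap_comp_Hmap_apply_coe_add_half_half (h0 : 0 ≤ s) (h1 : s ≤ 1/2) :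
    (Vmap 0 1 ∘ Hmap 0 1) (((s + 1/2 : ℝ) : T1), ((1/2 : ℝ) : T1)) =
      ((s : T1), ((s + 1/2 : ℝ) : T1)) := by
  rw [comp_apply, Hmap_zero_one, norm_coe_half, ← AddCircle.coe_add, add_assoc, add_halves,
    AddCircle.coe_add_period, Vmap_zero_one, norm_coe_of_nonneg_of_le_half h0 h1,
    ← AddCircle.coe_add, add_comm]

end HalfTurn

/-- for s ∈ (0,1/2), V_0^1 ∘ H_0^1 maps (s, s+1/2) ↦ (1/2, s) ↦
(s+1/2, 1/2) ↦ (s, s+1/2); so the three segments {(s, s+1/2) : s ∈ (0,1/2)},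
{(1/2, s) : s ∈ (0,1/2)}, {(s, 1/2) : s ∈ (1/2,1)} form a 3-cycle for V_0^1 ∘ H_0^1, and
every point of each of these segments is a fixed point of (V_0^1 ∘ H_0^1)³. -/
theorem wedge_tau1_three_cycle :
    ∀ s ∈ Set.Ioo (0 : ℝ) (1/2),
      (Vmap 0 1 ∘ Hmap 0 1) (((s : ℝ) : T1), ((s + 1/2 : ℝ) : T1)) =
        (((1/2 : ℝ) : T1), ((s : ℝ) : T1)) ∧
      (Vmap 0 1 ∘ Hmap 0 1) (((1/2 : ℝ) : T1), ((s : ℝ) : T1)) =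
        (((s + 1/2 : ℝ) : T1), ((1/2 : ℝ) : T1)) ∧
      (Vmap 0 1 ∘ Hmap 0 1) (((s + 1/2 : ℝ) : T1), ((1/2 : ℝ) : T1)) =
        (((s : ℝ) : T1), ((s + 1/2 : ℝ) : T1)) ∧
      (Vmap 0 1 ∘ Hmap 0 1)^[3] (((s : ℝ) : T1), ((s + 1/2 : ℝ) : T1)) =
        (((s : ℝ) : T1), ((s + 1/2 : ℝ) : T1)) ∧
      (Vmap 0 1 ∘ Hmap 0 1)^[3] (((1/2 : ℝ) : T1), ((s : ℝ) : T1)) =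
        (((1/2 : ℝ) : T1), ((s : ℝ) : T1)) ∧
      (Vmap 0 1 ∘ Hmap 0 1)^[3] (((s + 1/2 : ℝ) : T1), ((1/2 : ℝ) : T1)) =
        (((s + 1/2 : ℝ) : T1), ((1/2 : ℝ) : T1)) := by
  rintro s ⟨hs0, hs1⟩
  have e₁ := Vmap_comp_Hmap_apply_coe_coe_add_half hs0.le hs1.le
  have e₂ := Vmap_comp_Hmap_apply_half_coe hs0.le hs1.le
  have e₃ := Vmap_comp_Hmap_apply_coe_add_half_half hs0.le hs1.le
  exact ⟨e₁, e₂, e₃, isPeriodicPt_three_of_cycle e₁ e₂ e₃,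
    isPeriodicPt_three_of_cycle e₂ e₃ e₁, isPeriodicPt_three_of_cycle e₃ e₁ e₂⟩
end
end

section
/- For every s ∈ (0, 1/2) there exists δ > 0 such that for all (a,b) ∈ ℝ² with a² + b² < δ²: if a < b then (V_0^1 ∘ H_0^1)³(s + a, s + 1/2 + b) = (s + 3a − 2b, s + 1/2 + 2a − b), and if a > b then (V_0^1 ∘ H_0^1)³(s + a, s + 1/2 + b) = (s − a + 2b, s + 1/2 − 2a + 3b) (all coordinates taken modulo 1). That is, (V_0^1 ∘ H_0^1)³ is locally affine on each of the two sides of the segment {(s, s + 1/2) : s ∈ (0, 1/2)}, with linear parts given by the matrices [[3, −2], [2, −1]] and [[−1, 2], [−2, 3]] respectively. -/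
/-!
Lift points of `𝕋²` to `ℝ²`. Near the orbit of `(s, s + 1/2)`, every distance to `0` that the
three rounds of `V_0^1 ∘ H_0^1` evaluate is the distance to a fixed integer with a fixed sign,
hence affine in `(a, b)`. The exceptions are the two evaluations near the kink `1/2` of
`d_𝕋(·, 0)`, at `1/2 + a - b` and `3/2 - a + b`, whose branch is decided by the sign of `a - b`.
On each side the lift therefore moves by an affine map, and the final lift exceeds the claimed
one by `(1, 1)`.
-/

noncomputable section

theorem norm_coe_eq_of_sub_intCast {x r : ℝ} (n : ℤ) (h : x - n = r ∨ x - n = -r)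
    (h₀ : 0 ≤ r) (h₁ : r ≤ 1 / 2) : ‖(x : T1)‖ = r := by
  have hr : |x - n| = r := by
    rcases h with h | h <;> simp [h, abs_of_nonneg h₀]
  have hx : ((x - n : ℝ) : T1) = x := by simp
  rw [← hr, ← hx, AddCircle.norm_coe_eq_abs_iff (p := 1) one_ne_zero, abs_one, hr]
  exact h₁

theorem Vmap_comp_Hmap_coe {x y x' y' : ℝ} (hx : ‖(y : T1)‖ = x' - x)
    (hy : ‖(x' : T1)‖ = y' - y) :
    (Vmap 0 1 ∘ Hmap 0 1) ((x : T1), (y : T1)) = ((x' : T1), (y' : T1)) := by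
  simp only [Function.comp_apply, Hmap, Vmap, dT, sub_zero, one_mul, hx, hy,
    ← AddCircle.coe_add, add_sub_cancel]

local notation "Φ" => Vmap 0 1 ∘ Hmap 0 1

section Orbit

variable {s a b : ℝ}

theorem Vmap_comp_Hmap_iterate_three_of_lt (h₀ : 3 * (|a| + |b|) ≤ s)
    (h₁ : 3 * (|a| + |b|) ≤ 1 / 2 - s) (hab : a < b) :
    Φ^[3] (((s + a : ℝ) : T1), ((s + 1/2 + b : ℝ) : T1)) =
      (((s + 3*a - 2*b : ℝ) : T1), ((s + 1/2 + 2*a - b : ℝ) : T1)) := by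
  have := le_abs_self a; have := neg_abs_le a; have := le_abs_self b; have := neg_abs_le b
  have e₁ : Φ (((s + a : ℝ) : T1), ((s + 1/2 + b : ℝ) : T1)) =
      (((1/2 + a - b : ℝ) : T1), ((s + 1 + a : ℝ) : T1)) :=
    Vmap_comp_Hmap_coe (norm_coe_eq_of_sub_intCast 1 (.inr (by ring)) (by linarith) (by linarith))
      (norm_coe_eq_of_sub_intCast 0 (.inl (by ring)) (by linarith) (by linarith))
  have e₂ : Φ (((1/2 + a - b : ℝ) : T1), ((s + 1 + a : ℝ) : T1)) =
      (((s + 1/2 + 2*a - b : ℝ) : T1), ((3/2 - a + b : ℝ) : T1)) :=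
    Vmap_comp_Hmap_coe (norm_coe_eq_of_sub_intCast 1 (.inl (by ring)) (by linarith) (by linarith))
      (norm_coe_eq_of_sub_intCast 1 (.inr (by ring)) (by linarith) (by linarith))
  have e₃ : Φ (((s + 1/2 + 2*a - b : ℝ) : T1), ((3/2 - a + b : ℝ) : T1)) =
      (((s + 3*a - 2*b + 1 : ℝ) : T1), ((s + 1/2 + 2*a - b + 1 : ℝ) : T1)) :=
    Vmap_comp_Hmap_coe (norm_coe_eq_of_sub_intCast 2 (.inr (by ring)) (by linarith) (by linarith))
      (norm_coe_eq_of_sub_intCast 1 (.inl (by ring)) (by linarith) (by linarith))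
  rw [show Φ^[3] _ = Φ (Φ (Φ _)) from rfl, e₁, e₂, e₃, AddCircle.coe_add_period,
    AddCircle.coe_add_period]

theorem Vmap_comp_Hmap_iterate_three_of_gt (h₀ : 3 * (|a| + |b|) ≤ s)
    (h₁ : 3 * (|a| + |b|) ≤ 1 / 2 - s) (hab : b < a) :
    Φ^[3] (((s + a : ℝ) : T1), ((s + 1/2 + b : ℝ) : T1)) =
      (((s - a + 2*b : ℝ) : T1), ((s + 1/2 - 2*a + 3*b : ℝ) : T1)) := by
  have := le_abs_self a; have := neg_abs_le a; have := le_abs_self b; have := neg_abs_le b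
  have e₁ : Φ (((s + a : ℝ) : T1), ((s + 1/2 + b : ℝ) : T1)) =
      (((1/2 + a - b : ℝ) : T1), ((s + 1 - a + 2*b : ℝ) : T1)) :=
    Vmap_comp_Hmap_coe (norm_coe_eq_of_sub_intCast 1 (.inr (by ring)) (by linarith) (by linarith))
      (norm_coe_eq_of_sub_intCast 1 (.inr (by ring)) (by linarith) (by linarith))
  have e₂ : Φ (((1/2 + a - b : ℝ) : T1), ((s + 1 - a + 2*b : ℝ) : T1)) =
      (((s + 1/2 + b : ℝ) : T1), ((3/2 - a + b : ℝ) : T1)) :=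
    Vmap_comp_Hmap_coe (norm_coe_eq_of_sub_intCast 1 (.inl (by ring)) (by linarith) (by linarith))
      (norm_coe_eq_of_sub_intCast 1 (.inr (by ring)) (by linarith) (by linarith))
  have e₃ : Φ (((s + 1/2 + b : ℝ) : T1), ((3/2 - a + b : ℝ) : T1)) =
      (((s - a + 2*b + 1 : ℝ) : T1), ((s + 1/2 - 2*a + 3*b + 1 : ℝ) : T1)) :=
    Vmap_comp_Hmap_coe (norm_coe_eq_of_sub_intCast 1 (.inl (by ring)) (by linarith) (by linarith))
      (norm_coe_eq_of_sub_intCast 1 (.inl (by ring)) (by linarith) (by linarith))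
  rw [show Φ^[3] _ = Φ (Φ (Φ _)) from rfl, e₁, e₂, e₃, AddCircle.coe_add_period,
    AddCircle.coe_add_period]

end Orbit

/-- (V_0^1 ∘ H_0^1)³ is locally affine on each of the two sides of the
segment {(s, s+1/2) : s ∈ (0,1/2)}, with linear parts [[3, −2], [2, −1]] (on the side
a < b) and [[−1, 2], [−2, 3]] (on the side a > b). -/
theorem wedge_tau1_cube_locally_affine (s : ℝ) (hs : s ∈ Set.Ioo (0 : ℝ) (1/2)) :
    ∃ δ > 0, ∀ a b : ℝ, a ^ 2 + b ^ 2 < δ ^ 2 →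
      (a < b →
        (Vmap 0 1 ∘ Hmap 0 1)^[3] (((s + a : ℝ) : T1), ((s + 1/2 + b : ℝ) : T1)) =
          (((s + 3*a - 2*b : ℝ) : T1), ((s + 1/2 + 2*a - b : ℝ) : T1))) ∧
      (a > b →
        (Vmap 0 1 ∘ Hmap 0 1)^[3] (((s + a : ℝ) : T1), ((s + 1/2 + b : ℝ) : T1)) =
          (((s - a + 2*b : ℝ) : T1), ((s + 1/2 - 2*a + 3*b : ℝ) : T1))) := by
  obtain ⟨hs₀, hs₁⟩ := hs
  have hδ : 0 < min s (1/2 - s) / 6 := div_pos (lt_min hs₀ (by linarith)) (by norm_num)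
  refine ⟨min s (1/2 - s) / 6, hδ, fun a b hab => ?_⟩
  have ha : |a| < min s (1/2 - s) / 6 := abs_lt_of_sq_lt_sq (by nlinarith) hδ.le
  have hb : |b| < min s (1/2 - s) / 6 := abs_lt_of_sq_lt_sq (by nlinarith) hδ.le
  have h₀ : 3 * (|a| + |b|) ≤ s := by linarith [min_le_left s (1/2 - s)]
  have h₁ : 3 * (|a| + |b|) ≤ 1 / 2 - s := by linarith [min_le_right s (1/2 - s)]
  exact ⟨Vmap_comp_Hmap_iterate_three_of_lt h₀ h₁, Vmap_comp_Hmap_iterate_three_of_gt h₀ h₁⟩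
end
end
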